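/- arXiv:2208.03856 — 3 statements merged into one kernel-verified Lean document; each statement's English description precedes it below -/
import Mathlib

section
/- Let x, y, s, t be integers such that x^2 + s^2 - s^4 = -t^2 and y^2 + t^2 - t^4 = s^2 - 1. Then (x,y,s,t) = (0, 0, ±1, 0). -/
/-!
Write the equations as `x² = (s²)² - (s² + t²)` and `y² = (t²)² - (t² - s² + 1)`. A square strictly
below `n²` is at most `(n - 1)²`, so each subtracted quantity, when positive, is at least `2n - 1`.
The first equation then forces `t² ≥ s² - 1`. Either `t² + 1 = s²`, and two consecutive squares
force `t = 0`, or the second equation applies and gives `s² + t² ≤ 2`, which with `x² ≥ 0` again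
forces `t = 0`. Then `y² + 1 = s²` gives `y = 0`, `s² = 1`, and finally `x = 0`.
-/

namespace Int

theorem sq_le_sub_one_sq_of_sq_lt {a n : ℤ} (h : a ^ 2 < n ^ 2) : a ^ 2 ≤ (n - 1) ^ 2 := by
  have habs : |a| + 1 ≤ |n| := sq_lt_sq.mp h
  calc a ^ 2 = |a| ^ 2 := (sq_abs a).symm
    _ ≤ (|n| - 1) ^ 2 := pow_le_pow_left₀ (abs_nonneg a) (by linarith) 2
    _ ≤ (n - 1) ^ 2 := by nlinarith [sq_abs n, le_abs_self n]

theorem eq_zero_of_sq_eq_sq_add_one {a b : ℤ} (h : a ^ 2 = b ^ 2 + 1) : b = 0 := by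
  have hprod : (a - b) * (a + b) = 1 := by linear_combination h
  rcases eq_one_or_neg_one_of_mul_eq_one' hprod with ⟨_, _⟩ | ⟨_, _⟩ <;> omega

end Int

theorem stmt_5 (x y s t : ℤ)
    (h1 : x^2 + s^2 - s^4 = -t^2) (h2 : y^2 + t^2 - t^4 = s^2 - 1) :
    x = 0 ∧ y = 0 ∧ (s = 1 ∨ s = -1) ∧ t = 0 := by
  have hx : x ^ 2 = (s ^ 2) ^ 2 - (s ^ 2 + t ^ 2) := by linear_combination h1
  have hy : y ^ 2 = (t ^ 2) ^ 2 - (t ^ 2 - s ^ 2 + 1) := by linear_combination h2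
  have hts : s ^ 2 - 1 ≤ t ^ 2 := by
    by_contra! hlt
    have := Int.sq_le_sub_one_sq_of_sq_lt (a := x) (n := s ^ 2) (by nlinarith [sq_nonneg t])
    nlinarith
  have ht : t = 0 := by
    rcases hts.eq_or_lt with heq | hlt
    · exact Int.eq_zero_of_sq_eq_sq_add_one (a := s) (by linarith)
    · have := Int.sq_le_sub_one_sq_of_sq_lt (a := y) (n := t ^ 2) (by nlinarith)
      have hsum : s ^ 2 + t ^ 2 ≤ 2 := by nlinarith
      nlinarith [sq_nonneg x, sq_nonneg s, sq_nonneg t]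
  subst ht
  have hy0 : y = 0 := Int.eq_zero_of_sq_eq_sq_add_one (a := s) (by linarith)
  subst hy0
  have hs : s ^ 2 = 1 := by linarith
  have hx0 : x ^ 2 = 0 := by rw [hx, hs]; norm_num
  exact ⟨pow_eq_zero_iff two_ne_zero |>.mp hx0, rfl, sq_eq_one_iff.mp hs, rfl⟩
end

section
/- Let x, y, s, t be integers such that x^2 + s^2 - s^4 = t^2 and y^2 - 1 - t^2 - t^4 = s^2. Then (x,y,s,t) = (±u^2, ±(u^2+1), ±u, ±u) for some integer u. -/
/-!
The argument only uses that no integer square lies strictly between two consecutive squares.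
Since `y² = t⁴ + t² + 1 + s²` exceeds `(t²)²`, it is at least `(t² + 1)²`, so `t² ≤ s²`.
If `t² < s²`, then `x² = s⁴ - s² + t²` lies below `(s²)²`, hence at most `(s² - 1)²`, which
forces `s² + t² ≤ 1`, i.e. `t = 0`, `s² = 1` and `y² = 2`: impossible. So `t² = s²`, and then
`x² = (s²)²` and `y² = (s² + 1)²`.
-/

theorem Int.add_one_sq_le_sq_of_sq_lt_sq {a b : ℤ} (hb : 0 ≤ b) (h : b ^ 2 < a ^ 2) :
    (b + 1) ^ 2 ≤ a ^ 2 := by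
  have hlt : b < |a| := by simpa only [abs_of_nonneg hb] using sq_lt_sq.mp h
  simpa only [sq_abs] using pow_le_pow_left₀ (by omega) (Int.add_one_le_iff.mpr hlt) 2

theorem sq_le_sq_of_sq_eq_pow_four_add {y s t : ℤ} (hy : y ^ 2 = t ^ 4 + t ^ 2 + 1 + s ^ 2) :
    t ^ 2 ≤ s ^ 2 := by
  have h : (t ^ 2 + 1) ^ 2 ≤ y ^ 2 :=
    Int.add_one_sq_le_sq_of_sq_lt_sq (sq_nonneg t) (by nlinarith [sq_nonneg s])
  nlinarith

theorem sq_add_sq_le_one_of_sq_eq_pow_four_sub {x s t : ℤ} (hx : x ^ 2 = s ^ 4 - s ^ 2 + t ^ 2)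
    (hts : t ^ 2 < s ^ 2) : s ^ 2 + t ^ 2 ≤ 1 := by
  by_contra! h
  have hlow : (s ^ 2 - 1) ^ 2 < x ^ 2 := by nlinarith
  have hup : x ^ 2 < (s ^ 2) ^ 2 := by nlinarith
  have := Int.add_one_sq_le_sq_of_sq_lt_sq (by nlinarith [sq_nonneg t]) hlow
  simp only [sub_add_cancel] at this
  omega

theorem Int.sq_ne_two (y : ℤ) : y ^ 2 ≠ 2 := by
  intro hy
  have := Int.add_one_sq_le_sq_of_sq_lt_sq (a := y) (b := 1) zero_le_one (by omega)
  omega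

theorem sq_eq_sq_of_sq_eq_pow_four_sub_of_sq_eq_pow_four_add {x y s t : ℤ}
    (hx : x ^ 2 = s ^ 4 - s ^ 2 + t ^ 2) (hy : y ^ 2 = t ^ 4 + t ^ 2 + 1 + s ^ 2) :
    t ^ 2 = s ^ 2 := by
  refine (sq_le_sq_of_sq_eq_pow_four_add hy).antisymm (not_lt.mp fun hts => Int.sq_ne_two y ?_)
  have hsum := sq_add_sq_le_one_of_sq_eq_pow_four_sub hx hts
  have ht : t ^ 2 = 0 := by nlinarith [sq_nonneg t]
  have hs : s ^ 2 = 1 := by nlinarith [sq_nonneg t]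
  rw [hy, show t ^ 4 = (t ^ 2) ^ 2 by ring, ht, hs]
  norm_num

theorem stmt_9 (x y s t : ℤ)
    (h1 : x^2 + s^2 - s^4 = t^2) (h2 : y^2 - 1 - t^2 - t^4 = s^2) :
    ∃ u : ℤ, (x = u^2 ∨ x = -u^2) ∧ (y = u^2 + 1 ∨ y = -(u^2 + 1)) ∧
      (s = u ∨ s = -u) ∧ (t = u ∨ t = -u) := by
  have hts : t ^ 2 = s ^ 2 :=
    sq_eq_sq_of_sq_eq_pow_four_sub_of_sq_eq_pow_four_add (x := x) (y := y) (by linarith)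
      (by linarith)
  refine ⟨s, sq_eq_sq_iff_eq_or_eq_neg.mp ?_, sq_eq_sq_iff_eq_or_eq_neg.mp ?_, .inl rfl,
    sq_eq_sq_iff_eq_or_eq_neg.mp hts⟩
  · linear_combination h1 + hts
  · linear_combination h2 + (t ^ 2 + s ^ 2 + 1) * hts
end

section
/- Let x, y, s, t be integers such that x^2 - 1 - s^2 - s^4 = t^2 and y^2 - 1 - t^2 - t^4 = -s^2. Then (x,y,s,t) = (±1, ±1, 0, 0). -/
/-!
Since `x² = (s²)² + (s² + t² + 1)` lies strictly above the square `(s²)²`, it is at least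
`(s² + 1)²`, which forces `s² ≤ t²`. Then `y² = (t²)² + (t² - s² + 1)` lies strictly above
`(t²)²` as well, and the same gap estimate gives `s² + t² ≤ 0`.
-/

lemma Int.add_one_sq_le_sq_of_sq_lt {n m : ℤ} (hn : 0 ≤ n) (h : n ^ 2 < m ^ 2) :
    (n + 1) ^ 2 ≤ m ^ 2 := by
  rw [sq_lt_sq, abs_of_nonneg hn] at h
  rw [sq_le_sq, abs_of_nonneg (by omega)]
  omega

lemma Int.two_mul_sq_add_one_le_of_sq_eq_pow_four_add {m n k : ℤ} (hk : 0 < k)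
    (h : m ^ 2 = n ^ 4 + k) : 2 * n ^ 2 + 1 ≤ k := by
  have := Int.add_one_sq_le_sq_of_sq_lt (sq_nonneg n) (by nlinarith : (n ^ 2) ^ 2 < m ^ 2)
  nlinarith

theorem stmt_14 (x y s t : ℤ)
    (h1 : x^2 - 1 - s^2 - s^4 = t^2) (h2 : y^2 - 1 - t^2 - t^4 = -s^2) :
    (x = 1 ∨ x = -1) ∧ (y = 1 ∨ y = -1) ∧ s = 0 ∧ t = 0 := by
  have hst : 2 * s ^ 2 + 1 ≤ s ^ 2 + t ^ 2 + 1 :=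
    Int.two_mul_sq_add_one_le_of_sq_eq_pow_four_add (m := x) (by positivity) (by linarith)
  have hts : 2 * t ^ 2 + 1 ≤ t ^ 2 - s ^ 2 + 1 :=
    Int.two_mul_sq_add_one_le_of_sq_eq_pow_four_add (m := y) (by linarith) (by linarith)
  have hs : s = 0 := pow_eq_zero_iff two_ne_zero |>.mp (by linarith [sq_nonneg s, sq_nonneg t])
  have ht : t = 0 := pow_eq_zero_iff two_ne_zero |>.mp (by linarith [sq_nonneg s, sq_nonneg t])
  subst hs ht
  exact ⟨sq_eq_one_iff.mp (by linarith), sq_eq_one_iff.mp (by linarith), rfl, rfl⟩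
end
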